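/- In the construction below, the map Δ is injective on maximal subgroups: if M and M̃ are maximal subgroups of G with Δ(M) = Δ(M̃), then M = M̃. -/

import Mathlib

namespace BranchPaper

universe u

/-- Vertices at level `n` of the rooted tree defined by the sequence of alphabets `X`:
strings `x₁ ⋯ x_n` with `x_{i+1} ∈ X i` (we index alphabets from `0`). -/
abbrev Vertex (X : ℕ → Type u) (n : ℕ) : Type u := ∀ i : Fin n, X (i : ℕ)

/-- The shifted sequence of alphabets `𝔛.σⁿ`. -/
abbrev shift (X : ℕ → Type u) (n : ℕ) : ℕ → Type u := fun k => X (n + k)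

variable {X : ℕ → Type u}

/-- Compatibility of a sequence of level permutations with truncation: this is precisely
the condition for the family to define an automorphism of the rooted tree. -/
def Compat (p : ∀ n, Equiv.Perm (Vertex X n)) : Prop :=
  ∀ (n : ℕ) (v : Vertex X (n + 1)), Fin.init (p (n + 1) v) = p n (Fin.init v)

/-- The automorphism group of the rooted tree `T_X`, realised as the subgroup of
`∏ₙ Sym(L(n))` of families of layer permutations compatible with truncation. -/
def treeAutGroup (X : ℕ → Type u) : Subgroup (∀ n, Equiv.Perm (Vertex X n)) where
  carrier := {p | Compat p}
  one_mem' := fun _ _ => rfl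
  mul_mem' := by
    intro a b ha hb n v
    show Fin.init (a (n + 1) (b (n + 1) v)) = a n (b n (Fin.init v))
    rw [ha, hb]
  inv_mem' := by
    intro a ha n v
    apply (a n).injective
    show a n (Fin.init ((a (n + 1))⁻¹ v)) = a n ((a n)⁻¹ (Fin.init v))
    rw [← ha n ((a (n + 1))⁻¹ v)]
    exact (congrArg Fin.init ((a (n + 1)).apply_symm_apply v)).trans ((a n).apply_symm_apply _).symm

/-- `Aut(T_X)`. -/
abbrev TreeAut (X : ℕ → Type u) := ↥(treeAutGroup X)

lemma mem_treeAutGroup {p : ∀ n, Equiv.Perm (Vertex X n)} : p ∈ treeAutGroup X ↔ Compat p :=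
  Iff.rfl

lemma TreeAut.compat (g : TreeAut X) : Compat (g.1) := g.2

/-- The first `n` letters of a vertex of length `n + m`. -/
def front {n m : ℕ} (w : Vertex X (n + m)) : Vertex X n := fun i => w (Fin.castAdd m i)

/-- The last `m` letters of a vertex of length `n + m`, as a vertex of the shifted tree. -/
def back {n m : ℕ} (w : Vertex X (n + m)) : Vertex (shift X n) m := fun i => w (Fin.natAdd n i)

/-- Concatenation of a vertex of `T_X` with a vertex of the shifted tree. -/
def append {n m : ℕ} (v : Vertex X n) (w : Vertex (shift X n) m) : Vertex X (n + m) :=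
  Fin.addCases (motive := fun i => X (i : ℕ)) v w

@[simp] lemma front_append {n m : ℕ} (v : Vertex X n) (w : Vertex (shift X n) m) :
    front (append v w) = v := by
  funext i
  show Fin.addCases (motive := fun i => X (i : ℕ)) v w (Fin.castAdd m i) = v i
  exact Fin.addCases_left i

@[simp] lemma back_append {n m : ℕ} (v : Vertex X n) (w : Vertex (shift X n) m) :
    back (append v w) = w := by
  funext i
  show Fin.addCases (motive := fun i => X (i : ℕ)) v w (Fin.natAdd n i) = w i
  exact Fin.addCases_right i

@[simp] lemma append_front_back {n m : ℕ} (w : Vertex X (n + m)) :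
    append (front w) (back w) = w := by
  funext i
  induction i using Fin.addCases with
  | left i =>
      show Fin.addCases (motive := fun i => X (i : ℕ)) (front w) (back w) (Fin.castAdd m i)
        = w (Fin.castAdd m i)
      rw [Fin.addCases_left]
      rfl
  | right i =>
      show Fin.addCases (motive := fun i => X (i : ℕ)) (front w) (back w) (Fin.natAdd n i)
        = w (Fin.natAdd n i)
      rw [Fin.addCases_right]
      rfl

lemma init_append {n m : ℕ} (v : Vertex X n) (w : Vertex (shift X n) (m + 1)) :
    Fin.init (n := n + m) (append (n := n) (m := m + 1) v w) = append v (Fin.init w) := by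
  funext i
  induction i using Fin.addCases with
  | left i =>
      have h1 : Fin.addCases (motive := fun j => X (j : ℕ)) v w (Fin.castAdd (m + 1) i)
          = v i := Fin.addCases_left i
      have h2 : Fin.addCases (motive := fun j => X (j : ℕ)) v (Fin.init w) (Fin.castAdd m i)
          = v i := Fin.addCases_left i
      exact h1.trans h2.symm
  | right i =>
      have h1 : Fin.addCases (motive := fun j => X (j : ℕ)) v w (Fin.natAdd n i.castSucc)
          = w i.castSucc := Fin.addCases_right i.castSucc
      have h2 : Fin.addCases (motive := fun j => X (j : ℕ)) v (Fin.init w) (Fin.natAdd n i)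
          = Fin.init w i := Fin.addCases_right i
      exact h1.trans h2.symm

lemma front_act (g : TreeAut X) (n : ℕ) :
    ∀ (m : ℕ) (w : Vertex X (n + m)), front (g.1 (n + m) w) = g.1 n (front w) := by
  intro m
  induction m with
  | zero => intro w; rfl
  | succ m ih =>
      intro w
      calc front (g.1 (n + (m + 1)) w)
          = front (m := m) (Fin.init (n := n + m) (g.1 (n + m + 1) w)) := rfl
        _ = front (m := m) (g.1 (n + m) (Fin.init (n := n + m) w)) := by
              rw [g.compat (n + m) w]
        _ = g.1 n (front (Fin.init (n := n + m) w)) := ih _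
        _ = g.1 n (front w) := rfl

lemma coe_inv_apply (g : TreeAut X) (n : ℕ) (v : Vertex X n) :
    (g⁻¹).1 n v = (g.1 n)⁻¹ v := rfl

/-- The section `g|_v` of a tree automorphism at a vertex `v`, an automorphism of the
shifted tree, characterised by `g (v * w) = g v * (g|_v) w`. -/
def sectionAt (g : TreeAut X) {n : ℕ} (v : Vertex X n) : TreeAut (shift X n) :=
  ⟨fun m =>
    { toFun := fun w => back (g.1 (n + m) (append v w))
      invFun := fun w => back ((g⁻¹).1 (n + m) (append (g.1 n v) w))
      left_inv := by
        intro w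
        have hfront : front (g.1 (n + m) (append v w)) = g.1 n v := by
          rw [front_act, front_append]
        have key := append_front_back (g.1 (n + m) (append v w))
        rw [hfront] at key
        show back ((g⁻¹).1 (n + m) (append (g.1 n v) (back (g.1 (n + m) (append v w))))) = w
        rw [key]
        have h2 : (g⁻¹).1 (n + m) (g.1 (n + m) (append v w)) = append v w := by
          show (g.1 (n + m))⁻¹ (g.1 (n + m) (append v w)) = append v w
          exact Equiv.symm_apply_apply _ _
        rw [h2, back_append]
      right_inv := by
        intro w
        have hfront : front ((g⁻¹).1 (n + m) (append (g.1 n v) w)) = v := by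
          rw [front_act, front_append]
          show (g.1 n)⁻¹ (g.1 n v) = v
          exact Equiv.symm_apply_apply _ _
        have key := append_front_back ((g⁻¹).1 (n + m) (append (g.1 n v) w))
        rw [hfront] at key
        show back (g.1 (n + m) (append v (back ((g⁻¹).1 (n + m) (append (g.1 n v) w))))) = w
        rw [key]
        have h2 : g.1 (n + m) ((g⁻¹).1 (n + m) (append (g.1 n v) w)) = append (g.1 n v) w := by
          show g.1 (n + m) ((g.1 (n + m))⁻¹ (append (g.1 n v) w)) = append (g.1 n v) w
          exact Equiv.apply_symm_apply _ _
        rw [h2, back_append] },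
   by
    intro m w
    have h1 : Fin.init (n := n + m) (g.1 (n + m + 1) (append (n := n) (m := m + 1) v w))
        = g.1 (n + m) (Fin.init (n := n + m) (append (n := n) (m := m + 1) v w)) :=
      g.compat (n + m) (append (n := n) (m := m + 1) v w)
    calc Fin.init (back (n := n) (m := m + 1)
            (g.1 (n + (m + 1)) (append (n := n) (m := m + 1) v w)))
        = back (m := m) (Fin.init (n := n + m)
            (g.1 (n + m + 1) (append (n := n) (m := m + 1) v w))) := rfl
      _ = back (m := m) (g.1 (n + m)
            (Fin.init (n := n + m) (append (n := n) (m := m + 1) v w))) := by rw [h1]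
      _ = back (g.1 (n + m) (append v (Fin.init w))) := by rw [init_append v w]⟩

/-- An automorphism is finitary if all sections at some level are trivial. -/
def Finitary (g : TreeAut X) : Prop := ∃ n : ℕ, ∀ v : Vertex X n, sectionAt g v = 1

/-- `v` is a prefix of `w`. -/
def IsPrefixOf {n k : ℕ} (v : Vertex X n) (w : Vertex X k) : Prop :=
  ∃ h : n ≤ k, ∀ i : Fin n, w (Fin.castLE h i) = v i

/-- `g` fixes every vertex which does not have `v` as a prefix. -/
def FixesOutside (g : TreeAut X) {n : ℕ} (v : Vertex X n) : Prop :=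
  ∀ (k : ℕ) (w : Vertex X k), ¬ IsPrefixOf v w → g.1 k w = w

/-- A group of tree automorphisms acts spherically transitively if it acts transitively
on every layer. -/
def SphericallyTransitive (G : Subgroup (TreeAut X)) : Prop :=
  ∀ (n : ℕ) (v w : Vertex X n), ∃ g ∈ G, g.1 n v = w

/-- A group of tree automorphisms is layered if for every `g ∈ G` and every vertex `v`,
the insertion `ins_v (g|_v)` (the unique automorphism fixing everything outside the
subtree at `v` and with section `g|_v` at `v`) again belongs to `G`. -/
def Layered (G : Subgroup (TreeAut X)) : Prop :=
  ∀ g ∈ G, ∀ (n : ℕ) (v : Vertex X n),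
    ∃ h : TreeAut X, h ∈ G ∧ FixesOutside h v ∧ sectionAt h v = sectionAt g v

/-- The rigid vertex stabiliser of `v` in `G`. -/
def rist (G : Subgroup (TreeAut X)) {n : ℕ} (v : Vertex X n) : Subgroup (TreeAut X) where
  carrier := {g | g ∈ G ∧ FixesOutside g v}
  one_mem' := ⟨G.one_mem, fun _ _ _ => rfl⟩
  mul_mem' := by
    rintro a b ⟨haG, ha⟩ ⟨hbG, hb⟩
    refine ⟨G.mul_mem haG hbG, fun k w hw => ?_⟩
    show a.1 k (b.1 k w) = w
    rw [hb k w hw, ha k w hw]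
  inv_mem' := by
    rintro a ⟨haG, ha⟩
    refine ⟨G.inv_mem haG, fun k w hw => ?_⟩
    apply (a.1 k).injective
    show a.1 k ((a.1 k)⁻¹ w) = a.1 k w
    exact ((a.1 k).apply_symm_apply w).trans (ha k w hw).symm

/-- The rigid layer stabiliser `Rist_G(n)`, the subgroup generated by the rigid vertex
stabilisers of the vertices in layer `n`. -/
def RistL (G : Subgroup (TreeAut X)) (n : ℕ) : Subgroup (TreeAut X) :=
  Subgroup.closure (⋃ v : Vertex X n, (rist G v : Set (TreeAut X)))

/-- A ray in the rooted tree. -/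
def IsRay (u : ∀ n, Vertex X n) : Prop := ∀ n, Fin.init (u (n + 1)) = u n

/-- A `𝔲`-generalised spinal element: all sections away from the ray are finitary. -/
def GeneralisedSpinal (u : ∀ n, Vertex X n) (g : TreeAut X) : Prop :=
  ∀ (n : ℕ) (v : Vertex X n), v ≠ u n → Finitary (sectionAt g v)

section Portrait

/-- The action on layers induced by a portrait (a labelling of the vertices by
permutations of the corresponding alphabets). -/
def portraitAct (L : ∀ n, Vertex X n → Equiv.Perm (X n)) : ∀ n, Vertex X n → Vertex X n
  | 0, v => v
  | (n + 1), v =>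
      Fin.snoc (portraitAct L n (Fin.init v)) (L n (Fin.init v) (v (Fin.last n)))

lemma portraitAct_injective (L : ∀ n, Vertex X n → Equiv.Perm (X n)) :
    ∀ n, Function.Injective (portraitAct L n)
  | 0 => fun _ _ h => h
  | (n + 1) => by
      intro a b h
      simp only [portraitAct] at h
      have hinit : Fin.init a = Fin.init b := by
        apply portraitAct_injective L n
        have := congrArg Fin.init h
        simpa [Fin.init_snoc] using this
      have hlast : a (Fin.last n) = b (Fin.last n) := by
        have h2 := congrFun h (Fin.last n)
        rw [Fin.snoc_last, Fin.snoc_last, hinit] at h2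
        exact (L n (Fin.init b)).injective h2
      calc a = Fin.snoc (Fin.init a) (a (Fin.last n)) := (Fin.snoc_init_self a).symm
        _ = Fin.snoc (Fin.init b) (b (Fin.last n)) := by rw [hinit, hlast]
        _ = b := Fin.snoc_init_self b

/-- The tree automorphism determined by a portrait. -/
noncomputable def ofPortrait [∀ k, Finite (X k)] (L : ∀ n, Vertex X n → Equiv.Perm (X n)) :
    TreeAut X :=
  ⟨fun n => Equiv.ofBijective (portraitAct L n)
      (Finite.injective_iff_bijective.mp (portraitAct_injective L n)),
   by
    intro n v
    show Fin.init (portraitAct L (n + 1) v) = portraitAct L n (Fin.init v)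
    simp [portraitAct, Fin.init_snoc]⟩

end Portrait

section Construction

variable (S : ℕ → Type u)

/-- The spinal automorphism determined by a sequence `c` of group elements: it has the
rooted permutation induced by `c k` at the vertex `u_k x_{k+1}` and trivial label
everywhere else. -/
noncomputable def spinalAut [∀ k, Finite (X k)] [∀ n, Group (S n)]
    [∀ n, MulAction (S n) (X n)] (u : ∀ n, Vertex X n) (x : ∀ n, X n)
    (c : ∀ n, S (n + 1)) : TreeAut X :=
  ofPortrait (fun n => match n with
    | 0 => fun _ => 1
    | (k + 1) => fun v =>
        haveI := Classical.propDecidable (v = Fin.snoc (u k) (x k))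
        if v = Fin.snoc (u k) (x k) then MulAction.toPerm (c k) else 1)

/-- The rooted automorphism induced by an element acting on the first alphabet. -/
noncomputable def rootedAut (X : ℕ → Type u) [∀ k, Finite (X k)] {R : Type*} [Group R]
    [MulAction R (X 0)] (s : R) : TreeAut X :=
  ofPortrait (fun n => match n with
    | 0 => fun _ => MulAction.toPerm s
    | (_ + 1) => fun _ => 1)

/-- The group `Fin_𝔖(T)` of finitary automorphisms all of whose labels lie in the images
of the groups `S n` acting on the alphabets, described as a set. -/
def finSet (X : ℕ → Type u) (S : ℕ → Type u) [∀ n, Group (S n)]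
    [∀ n, MulAction (S n) (X n)] : Set (TreeAut X) :=
  {g | Finitary g ∧ ∀ (n : ℕ) (v : Vertex X n), ∃ s : S n, ∀ y : X n,
      g.1 (n + 1) (Fin.snoc v y) (Fin.last n) = s • y}

variable {G : Type u} [Group G]

/-- The branch group `Γ` of the construction. -/
noncomputable def gammaGroup [∀ k, Finite (X k)] [∀ n, Group (S n)]
    [∀ n, MulAction (S n) (X n)] (φ : G →* ∀ n, S (n + 1))
    (u : ∀ n, Vertex X n) (x : ∀ n, X n) : Subgroup (TreeAut X) :=
  Subgroup.closure
    (Set.range (fun s : S 0 => rootedAut X s) ∪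
     Set.range (fun g : G => spinalAut S u x (fun n => φ g n)))

/-- The subgroup `Δ(H) = ⟨Fin_𝔖(T) ∪ {s_h : h ∈ H}⟩`. -/
noncomputable def deltaGroup [∀ k, Finite (X k)] [∀ n, Group (S n)]
    [∀ n, MulAction (S n) (X n)] (φ : G →* ∀ n, S (n + 1))
    (u : ∀ n, Vertex X n) (x : ∀ n, X n) (H : Subgroup G) : Subgroup (TreeAut X) :=
  Subgroup.closure
    (finSet X S ∪ ((fun g : G => spinalAut S u x (fun n => φ g n)) '' (H : Set G)))

end Construction

section MaximalInjective

variable {X : ℕ → Type u}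

lemma treeAut_one_apply (n : ℕ) (v : Vertex X n) : (1 : TreeAut X).1 n v = v := rfl

lemma coe_mul_apply (g h : TreeAut X) (n : ℕ) (v : Vertex X n) :
    (g * h).1 n v = g.1 n (h.1 n v) := rfl

lemma apply_append (g : TreeAut X) {n m : ℕ} (v : Vertex X n) (w : Vertex (shift X n) m) :
    g.1 (n + m) (append v w) = append (g.1 n v) ((sectionAt g v).1 m w) := by
  have h1 : front (g.1 (n + m) (append v w)) = g.1 n v := by
    rw [front_act, front_append]
  have h2 : back (g.1 (n + m) (append v w)) = (sectionAt g v).1 m w := rfl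
  rw [← h1, ← h2, append_front_back]

lemma sectionAt_one {n : ℕ} (v : Vertex X n) : sectionAt (1 : TreeAut X) v = 1 := by
  apply Subtype.ext; funext m; apply Equiv.ext; intro w
  exact back_append v w

lemma sectionAt_eq_one_iff {g : TreeAut X} {n : ℕ} {v : Vertex X n} :
    sectionAt g v = 1 ↔ ∀ (m : ℕ) (w : Vertex (shift X n) m),
      back (g.1 (n + m) (append v w)) = w := by
  constructor
  · intro h m w
    have := congrArg (fun t : TreeAut (shift X n) => t.1 m w) h
    exact this
  · intro h; apply Subtype.ext; funext m; apply Equiv.ext; intro w; exact h m w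

lemma sectionAt_mul (g h : TreeAut X) {n : ℕ} (v : Vertex X n) :
    sectionAt (g * h) v = sectionAt g (h.1 n v) * sectionAt h v := by
  apply Subtype.ext; funext m; apply Equiv.ext; intro w
  show back ((g * h).1 (n + m) (append v w))
      = back (g.1 (n + m) (append (h.1 n v) ((sectionAt h v).1 m w)))
  rw [coe_mul_apply, apply_append h v w]

lemma sectionAt_inv (g : TreeAut X) {n : ℕ} (v : Vertex X n) :
    sectionAt g⁻¹ v = (sectionAt g ((g⁻¹).1 n v))⁻¹ := by
  have h := sectionAt_mul g g⁻¹ v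
  rw [mul_inv_cancel, sectionAt_one] at h
  exact eq_inv_of_mul_eq_one_right h.symm

/-- `g` fixes all coordinates at positions `≥ n`. -/
def FixesTail (g : TreeAut X) (n : ℕ) : Prop :=
  ∀ (k : ℕ) (z : Vertex X k) (i : Fin k), n ≤ (i : ℕ) → g.1 k z i = z i

lemma forall_section_one_iff {g : TreeAut X} {n : ℕ} :
    (∀ v : Vertex X n, sectionAt g v = 1) ↔ FixesTail g n := by
  constructor
  · intro h k z i hi
    obtain ⟨m, rfl⟩ : ∃ m, k = n + m := ⟨k - n, by omega⟩
    have h2 : back (g.1 (n + m) z) = back z := by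
      have h3 := sectionAt_eq_one_iff.mp (h (front z)) m (back z)
      rw [append_front_back] at h3
      exact h3
    have hj : (i : ℕ) - n < m := by omega
    have hij : Fin.natAdd n ⟨(i : ℕ) - n, hj⟩ = i := by
      apply Fin.ext
      show n + ((i : ℕ) - n) = (i : ℕ)
      omega
    rw [← hij]
    exact congrFun h2 ⟨(i : ℕ) - n, hj⟩
  · intro h v
    rw [sectionAt_eq_one_iff]
    intro m w
    funext i
    show g.1 (n + m) (append v w) (Fin.natAdd n i) = w i
    rw [h (n + m) (append v w) (Fin.natAdd n i) (Nat.le_add_right n i)]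
    exact congrFun (back_append v w) i

lemma FixesTail.mono {g : TreeAut X} {n n' : ℕ} (h : FixesTail g n) (hle : n ≤ n') :
    FixesTail g n' :=
  fun k z i hi => h k z i (le_trans hle hi)

lemma finitary_section_eventually {g : TreeAut X} (hg : Finitary g) :
    ∃ N, ∀ m, N ≤ m → ∀ v : Vertex X m, sectionAt g v = 1 := by
  obtain ⟨N, hN⟩ := hg
  have hft : FixesTail g N := forall_section_one_iff.mp hN
  exact ⟨N, fun m hm v => forall_section_one_iff.mpr (hft.mono hm) v⟩

lemma isRay_map (g : TreeAut X) {p : ∀ n, Vertex X n} (hp : IsRay p) :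
    IsRay (fun n => g.1 n (p n)) := by
  intro n
  rw [g.compat n (p (n + 1)), hp n]

lemma ray_prefix {u : ∀ n, Vertex X n} (hu : IsRay u) (m : ℕ) :
    ∀ (d : ℕ) (i : Fin m), u (m + d) (Fin.castLE (Nat.le_add_right m d) i) = u m i := by
  intro d
  induction d with
  | zero => intro i; rfl
  | succ d ih =>
      intro i
      show Fin.init (u (m + d + 1)) (Fin.castLE (Nat.le_add_right m d) i) = u m i
      rw [hu (m + d)]
      exact ih i

lemma ray_prefix' {u : ∀ n, Vertex X n} (hu : IsRay u) {m k : ℕ} (h : m ≤ k) (i : Fin m) :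
    u k (Fin.castLE h i) = u m i := by
  obtain ⟨d, rfl⟩ := Nat.exists_eq_add_of_le h
  exact ray_prefix hu m d i

lemma ray_ne {u p : ∀ n, Vertex X n} (hu : IsRay u) (hp : IsRay p) {n : ℕ}
    (h : p n ≠ u n) : ∀ d, p (n + d) ≠ u (n + d) := by
  intro d
  induction d with
  | zero => exact h
  | succ d ih =>
      intro e
      apply ih
      have e' : p (n + d + 1) = u (n + d + 1) := e
      rw [← hp (n + d), e', hu (n + d)]

lemma ray_ne' {u p : ∀ n, Vertex X n} (hu : IsRay u) (hp : IsRay p) {n m : ℕ}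
    (h : p n ≠ u n) (hnm : n ≤ m) : p m ≠ u m := by
  obtain ⟨d, rfl⟩ := Nat.exists_eq_add_of_le hnm
  exact ray_ne hu hp h d

lemma append_zero {n : ℕ} (v : Vertex X n) (w : Vertex (shift X n) 0) : append v w = v := by
  funext i
  exact Fin.addCases_left (motive := fun j => X (j : ℕ)) i

lemma portraitAct_succ (L : ∀ n, Vertex X n → Equiv.Perm (X n)) (n : ℕ) (v : Vertex X (n + 1)) :
    portraitAct L (n + 1) v
      = Fin.snoc (portraitAct L n (Fin.init v)) (L n (Fin.init v) (v (Fin.last n))) := rfl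

section Spinal

variable (S : ℕ → Type u) [∀ n, Group (S n)] [∀ n, MulAction (S n) (X n)]
variable [∀ k, Finite (X k)]
variable (u : ∀ n, Vertex X n) (x : ∀ n, X n)

/-- The labels of the spinal automorphism. -/
noncomputable def spinalLabel (c : ∀ n, S (n + 1)) : ∀ n, Vertex X n → Equiv.Perm (X n) :=
  fun n => match n with
    | 0 => fun _ => 1
    | (k + 1) => fun v =>
        haveI := Classical.propDecidable (v = Fin.snoc (u k) (x k))
        if v = Fin.snoc (u k) (x k) then MulAction.toPerm (c k) else 1

lemma spinalAut_eq (c : ∀ n, S (n + 1)) :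
    spinalAut S u x c = ofPortrait (spinalLabel S u x c) := by
  unfold spinalAut spinalLabel
  congr 1

lemma spinalAut_apply (c : ∀ n, S (n + 1)) (n : ℕ) (z : Vertex X n) :
    (spinalAut S u x c).1 n z = portraitAct (spinalLabel S u x c) n z := by
  rw [spinalAut_eq]
  rfl

lemma spinalLabel_succ (c : ∀ n, S (n + 1)) (k : ℕ) (v : Vertex X (k + 1)) :
    spinalLabel S u x c (k + 1) v
      = @ite _ (v = Fin.snoc (u k) (x k)) (Classical.propDecidable _)
          (MulAction.toPerm (c k)) 1 := rfl

lemma spinalLabel_succ_self (c : ∀ n, S (n + 1)) (k : ℕ) :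
    spinalLabel S u x c (k + 1) (Fin.snoc (u k) (x k)) = MulAction.toPerm (c k) := by
  rw [spinalLabel_succ, if_pos rfl]

lemma spinalLabel_succ_ne (c : ∀ n, S (n + 1)) (k : ℕ) {v : Vertex X (k + 1)}
    (hv : v ≠ Fin.snoc (u k) (x k)) :
    spinalLabel S u x c (k + 1) v = 1 := by
  rw [spinalLabel_succ, if_neg hv]

lemma spinalLabel_ray (hx : ∀ n, Fin.snoc (u n) (x n) ≠ u (n + 1)) (c : ∀ n, S (n + 1)) :
    ∀ k, spinalLabel S u x c k (u k) = 1
  | 0 => rfl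
  | (k + 1) => spinalLabel_succ_ne S u x c k (fun h => hx k h.symm)

lemma spinal_fix_ray (hu : IsRay u) (hx : ∀ n, Fin.snoc (u n) (x n) ≠ u (n + 1))
    (c : ∀ n, S (n + 1)) : ∀ n, portraitAct (spinalLabel S u x c) n (u n) = u n := by
  intro n
  induction n with
  | zero => rfl
  | succ k ih =>
      rw [portraitAct_succ, hu k, ih, spinalLabel_ray S u x hx c k]
      have : ((1 : Equiv.Perm (X k)) (u (k + 1) (Fin.last k))) = u (k + 1) (Fin.last k) := rfl
      rw [this, ← hu k]
      exact Fin.snoc_init_self _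

lemma spinal_fix_branch (hu : IsRay u) (hx : ∀ n, Fin.snoc (u n) (x n) ≠ u (n + 1))
    (c : ∀ n, S (n + 1)) (k : ℕ) :
    portraitAct (spinalLabel S u x c) (k + 1) (Fin.snoc (u k) (x k)) = Fin.snoc (u k) (x k) := by
  rw [portraitAct_succ, Fin.init_snoc, Fin.snoc_last, spinal_fix_ray S u x hu hx,
    spinalLabel_ray S u x hx c k]
  rfl

lemma spinalLabel_one : ∀ (k : ℕ) (w : Vertex X k),
    spinalLabel S u x (1 : ∀ n, S (n + 1)) k w = 1 := by
  intro k w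
  match k with
  | 0 => rfl
  | (k + 1) =>
      by_cases h : w = Fin.snoc (u k) (x k)
      · subst h
        rw [spinalLabel_succ_self]
        apply Equiv.ext
        intro y
        show (1 : S (k + 1)) • y = y
        rw [one_smul]
      · exact spinalLabel_succ_ne S u x _ k h

lemma spinal_portrait_one : ∀ (n : ℕ) (v : Vertex X n),
    portraitAct (spinalLabel S u x (1 : ∀ n, S (n + 1))) n v = v := by
  intro n
  induction n with
  | zero => intro v; rfl
  | succ k ih =>
      intro v
      rw [portraitAct_succ, ih, spinalLabel_one]
      have : ((1 : Equiv.Perm (X k)) (v (Fin.last k))) = v (Fin.last k) := rfl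
      rw [this]
      exact Fin.snoc_init_self _

lemma spinal_one : spinalAut S u x (1 : ∀ n, S (n + 1)) = 1 := by
  apply Subtype.ext; funext n; apply Equiv.ext; intro v
  have h := spinalAut_apply S u x (1 : ∀ n, S (n + 1)) n v
  rw [h, spinal_portrait_one]
  rfl

lemma spinalLabel_mul (hu : IsRay u) (hx : ∀ n, Fin.snoc (u n) (x n) ≠ u (n + 1))
    (c c' : ∀ n, S (n + 1)) (k : ℕ) (w : Vertex X k) (a : X k) :
    spinalLabel S u x c k (portraitAct (spinalLabel S u x c') k w)
        (spinalLabel S u x c' k w a)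
      = spinalLabel S u x (c * c') k w a := by
  match k with
  | 0 => rfl
  | (j + 1) =>
      by_cases h : w = Fin.snoc (u j) (x j)
      · subst h
        rw [spinal_fix_branch S u x hu hx, spinalLabel_succ_self, spinalLabel_succ_self,
          spinalLabel_succ_self]
        show c j • (c' j • a) = (c j * c' j) • a
        rw [mul_smul]
      · have h2 : portraitAct (spinalLabel S u x c') (j + 1) w ≠ Fin.snoc (u j) (x j) := by
          intro e
          apply h
          apply portraitAct_injective (spinalLabel S u x c') (j + 1)
          rw [e, spinal_fix_branch S u x hu hx]
        rw [spinalLabel_succ_ne S u x c j h2, spinalLabel_succ_ne S u x c' j h,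
          spinalLabel_succ_ne S u x (c * c') j h]
        rfl

lemma spinal_portrait_mul (hu : IsRay u) (hx : ∀ n, Fin.snoc (u n) (x n) ≠ u (n + 1))
    (c c' : ∀ n, S (n + 1)) : ∀ (n : ℕ) (v : Vertex X n),
    portraitAct (spinalLabel S u x c) n (portraitAct (spinalLabel S u x c') n v)
      = portraitAct (spinalLabel S u x (c * c')) n v := by
  intro n
  induction n with
  | zero => intro v; rfl
  | succ k ih =>
      intro v
      rw [portraitAct_succ (spinalLabel S u x c') k v, portraitAct_succ (spinalLabel S u x c) k,
        Fin.init_snoc, Fin.snoc_last, ih, portraitAct_succ (spinalLabel S u x (c * c')) k v,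
        spinalLabel_mul S u x hu hx]

lemma spinal_mul (hu : IsRay u) (hx : ∀ n, Fin.snoc (u n) (x n) ≠ u (n + 1))
    (c c' : ∀ n, S (n + 1)) :
    spinalAut S u x c * spinalAut S u x c' = spinalAut S u x (c * c') := by
  apply Subtype.ext; funext n; apply Equiv.ext; intro v
  have h1 : (spinalAut S u x c * spinalAut S u x c').1 n v
      = portraitAct (spinalLabel S u x c) n (portraitAct (spinalLabel S u x c') n v) := by
    rw [coe_mul_apply, spinalAut_apply, spinalAut_apply]
  rw [h1, spinal_portrait_mul S u x hu hx, ← spinalAut_apply]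

lemma spinal_inv (hu : IsRay u) (hx : ∀ n, Fin.snoc (u n) (x n) ≠ u (n + 1))
    (c : ∀ n, S (n + 1)) :
    spinalAut S u x c⁻¹ = (spinalAut S u x c)⁻¹ := by
  have h : spinalAut S u x c⁻¹ * spinalAut S u x c = 1 := by
    rw [spinal_mul S u x hu hx, inv_mul_cancel, spinal_one]
  exact eq_inv_of_mul_eq_one_left h

lemma spinal_fixes_ray_apply (hu : IsRay u) (hx : ∀ n, Fin.snoc (u n) (x n) ≠ u (n + 1))
    (c : ∀ n, S (n + 1)) (n : ℕ) :
    (spinalAut S u x c).1 n (u n) = u n := by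
  rw [spinalAut_apply]
  exact spinal_fix_ray S u x hu hx c n

lemma spinal_section_mul (hu : IsRay u) (hx : ∀ n, Fin.snoc (u n) (x n) ≠ u (n + 1))
    (c c' : ∀ n, S (n + 1)) (m : ℕ) :
    sectionAt (spinalAut S u x c) (u m) * sectionAt (spinalAut S u x c') (u m)
      = sectionAt (spinalAut S u x (c * c')) (u m) := by
  rw [← spinal_mul S u x hu hx, sectionAt_mul, spinal_fixes_ray_apply S u x hu hx]

lemma spinal_section_inv (hu : IsRay u) (hx : ∀ n, Fin.snoc (u n) (x n) ≠ u (n + 1))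
    (c : ∀ n, S (n + 1)) (m : ℕ) :
    (sectionAt (spinalAut S u x c) (u m))⁻¹ = sectionAt (spinalAut S u x c⁻¹) (u m) := by
  have h : sectionAt (spinalAut S u x c⁻¹) (u m) * sectionAt (spinalAut S u x c) (u m) = 1 := by
    rw [spinal_section_mul S u x hu hx, inv_mul_cancel, spinal_one, sectionAt_one]
  exact (eq_inv_of_mul_eq_one_left h).symm

lemma spinalLabel_off (hu : IsRay u) (c : ∀ n, S (n + 1)) {N m : ℕ} (hm : m < N)
    (z : Vertex X N) (i0 : Fin m) (hne : z (Fin.castLE (le_of_lt hm) i0) ≠ u m i0) :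
    spinalLabel S u x c N z = 1 := by
  obtain ⟨k, rfl⟩ : ∃ k, N = k + 1 := ⟨N - 1, by omega⟩
  refine spinalLabel_succ_ne S u x c k (fun hz => hne ?_)
  rw [hz]
  have e3 := Fin.snoc_castSucc (α := fun t : Fin (k + 1) => X (t : ℕ)) (x := x k) (p := u k)
      (i := Fin.castLE (Nat.lt_succ_iff.mp hm) i0)
  exact e3.trans (ray_prefix' hu (Nat.lt_succ_iff.mp hm) i0)

lemma append_snoc {n j : ℕ} (P : Vertex X n) (w : Vertex (shift X n) (j + 1)) :
    Fin.snoc (append P (Fin.init w)) (w (Fin.last j)) = append P w := by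
  have h1 := Fin.snoc_init_self (n := n + j) (α := fun i : Fin (n + j + 1) => X (i : ℕ))
    (q := append (n := n) (m := j + 1) P w)
  rw [init_append] at h1
  have h2 : append (n := n) (m := j + 1) P w (Fin.last (n + j)) = w (Fin.last j) :=
    Fin.addCases_right (Fin.last j)
  rw [h2] at h1
  exact h1

lemma spinal_off (hu : IsRay u) (hx : ∀ n, Fin.snoc (u n) (x n) ≠ u (n + 1))
    (c : ∀ n, S (n + 1)) {m : ℕ} {v : Vertex X (m + 1)} (hv : Fin.init v ≠ u m) :
    sectionAt (spinalAut S u x c) v = 1 := by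
  obtain ⟨i0, hi0⟩ := Function.ne_iff.mp hv
  have key : ∀ (j : ℕ) (w : Vertex (shift X (m + 1)) j),
      portraitAct (spinalLabel S u x c) ((m + 1) + j) (append v w)
        = append (portraitAct (spinalLabel S u x c) (m + 1) v) w := by
    intro j
    induction j with
    | zero => intro w; rw [append_zero, append_zero]
    | succ j ih =>
        intro w
        have hm : m < (m + 1) + j := by omega
        have hlab : spinalLabel S u x c ((m + 1) + j) (append v (Fin.init w)) = 1 := by
          apply spinalLabel_off S u x hu c hm (append v (Fin.init w)) i0
          have e2 : append (n := m + 1) (m := j) v (Fin.init w)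
              (Fin.castAdd j (Fin.castSucc i0)) = Fin.init v i0 :=
            Fin.addCases_left (Fin.castSucc i0)
          exact fun hEq => hi0 (e2.symm.trans hEq)
        show portraitAct (spinalLabel S u x c) (((m + 1) + j) + 1)
            (append (n := m + 1) (m := j + 1) v w)
            = append (portraitAct (spinalLabel S u x c) (m + 1) v) w
        rw [portraitAct_succ _ ((m + 1) + j) (append (n := m + 1) (m := j + 1) v w),
          init_append, ih (Fin.init w), hlab]
        have e4 : ((1 : Equiv.Perm (X ((m + 1) + j)))
              (append (n := m + 1) (m := j + 1) v w (Fin.last ((m + 1) + j))))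
            = append (n := m + 1) (m := j + 1) v w (Fin.last ((m + 1) + j)) := rfl
        rw [e4]
        have e3 : append (n := m + 1) (m := j + 1) v w (Fin.last ((m + 1) + j))
            = w (Fin.last j) := Fin.addCases_right (Fin.last j)
        rw [e3]
        exact append_snoc _ w
  rw [sectionAt_eq_one_iff]
  intro j w
  have h5 : (spinalAut S u x c).1 ((m + 1) + j) (append v w)
      = append ((spinalAut S u x c).1 (m + 1) v) w := by
    rw [spinalAut_apply, key j w, ← spinalAut_apply]
  rw [h5, back_append]

lemma spinal_section_tail (hu : IsRay u) (hx : ∀ n, Fin.snoc (u n) (x n) ≠ u (n + 1))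
    (hfaith : ∀ (n : ℕ) (s : S n), (∀ y : X n, s • y = y) → s = 1)
    (c : ∀ n, S (n + 1)) {m : ℕ}
    (h : sectionAt (spinalAut S u x c) (u m) = 1) :
    ∀ k, m ≤ k → c k = 1 := by
  intro k hk
  obtain ⟨d, rfl⟩ := Nat.exists_eq_add_of_le hk
  apply hfaith
  intro y
  obtain ⟨A, hA⟩ : ∃ A : Vertex X (m + d + 1), A = Fin.snoc (u (m + d)) (x (m + d)) := ⟨_, rfl⟩
  obtain ⟨z, hz⟩ : ∃ z : Vertex X (m + d + 2), z = Fin.snoc A y := ⟨_, rfl⟩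
  have hfront : front (n := m) (m := d + 2) z = u m := by
    funext i
    show z (Fin.castAdd (d + 2) i) = u m i
    rw [hz, hA]
    have s1 := Fin.snoc_castSucc (α := fun t : Fin (m + d + 2) => X (t : ℕ)) (x := y)
        (p := Fin.snoc (u (m + d)) (x (m + d)))
        (i := Fin.castSucc (Fin.castLE (Nat.le_add_right m d) i))
    have s2 := Fin.snoc_castSucc (α := fun t : Fin (m + d + 1) => X (t : ℕ)) (x := x (m + d))
        (p := u (m + d)) (i := Fin.castLE (Nat.le_add_right m d) i)
    exact s1.trans (s2.trans (ray_prefix' hu (Nat.le_add_right m d) i))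
  have hfix : (spinalAut S u x c).1 (m + (d + 2)) z = z := by
    have h1 : (spinalAut S u x c).1 (m + (d + 2))
          (append (front (n := m) (m := d + 2) z) (back (n := m) (m := d + 2) z))
        = append ((spinalAut S u x c).1 m (front (n := m) (m := d + 2) z))
            ((sectionAt (spinalAut S u x c) (front (n := m) (m := d + 2) z)).1 (d + 2)
              (back (n := m) (m := d + 2) z)) := apply_append _ _ _
    rw [append_front_back, hfront, spinal_fixes_ray_apply S u x hu hx, h] at h1
    have h2 : ((1 : TreeAut (shift X m)).1 (d + 2) (back (n := m) (m := d + 2) z))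
        = back (n := m) (m := d + 2) z := rfl
    rw [h2, ← hfront, append_front_back] at h1
    exact h1
  have hval : portraitAct (spinalLabel S u x c) ((m + d + 1) + 1) z (Fin.last (m + d + 1))
      = c (m + d) • y := by
    rw [portraitAct_succ, Fin.snoc_last, hz, Fin.init_snoc, Fin.snoc_last, hA,
      spinalLabel_succ_self]
    rfl
  have hval' : (spinalAut S u x c).1 (m + (d + 2)) z (Fin.last (m + d + 1)) = c (m + d) • y := by
    rw [spinalAut_apply]
    exact hval
  have hcoord := congrFun hfix (Fin.last (m + d + 1))
  rw [hval'] at hcoord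
  rw [hcoord, hz, Fin.snoc_last]

section Delta

variable {G : Type u} [Group G]

/-- The subgroup of tree automorphisms whose section along any ray is eventually equal to the
sections of some spinal automorphism `s_h`, `h ∈ H`, along the distinguished ray. -/
noncomputable def invSubgroup (φ : G →* ∀ n, S (n + 1)) (hu : IsRay u)
    (hx : ∀ n, Fin.snoc (u n) (x n) ≠ u (n + 1)) (H : Subgroup G) : Subgroup (TreeAut X) where
  carrier := {γ | ∀ p : ∀ n, Vertex X n, IsRay p → ∃ h ∈ H, ∃ N, ∀ m, N ≤ m →
      sectionAt γ (p m) = sectionAt (spinalAut S u x (φ h)) (u m)}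
  one_mem' := by
    intro p hp
    refine ⟨1, H.one_mem, 0, fun m _ => ?_⟩
    rw [map_one, spinal_one, sectionAt_one, sectionAt_one]
  mul_mem' := by
    intro a b ha hb p hp
    obtain ⟨h₁, h₁H, N₁, H₁⟩ := hb p hp
    obtain ⟨h₂, h₂H, N₂, H₂⟩ := ha (fun n => b.1 n (p n)) (isRay_map b hp)
    refine ⟨h₂ * h₁, H.mul_mem h₂H h₁H, max N₁ N₂, fun m hm => ?_⟩
    calc sectionAt (a * b) (p m)
        = sectionAt a (b.1 m (p m)) * sectionAt b (p m) := sectionAt_mul a b (p m)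
      _ = sectionAt (spinalAut S u x (φ h₂)) (u m)
            * sectionAt (spinalAut S u x (φ h₁)) (u m) := by
          rw [H₂ m (le_trans (le_max_right _ _) hm), H₁ m (le_trans (le_max_left _ _) hm)]
      _ = sectionAt (spinalAut S u x (φ h₂ * φ h₁)) (u m) :=
          spinal_section_mul S u x hu hx _ _ m
      _ = sectionAt (spinalAut S u x (φ (h₂ * h₁))) (u m) := by rw [map_mul]
  inv_mem' := by
    intro a ha p hp
    obtain ⟨h, hH, N, HN⟩ := ha (fun n => (a⁻¹).1 n (p n)) (isRay_map a⁻¹ hp)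
    refine ⟨h⁻¹, H.inv_mem hH, N, fun m hm => ?_⟩
    calc sectionAt a⁻¹ (p m)
        = (sectionAt a ((a⁻¹).1 m (p m)))⁻¹ := sectionAt_inv a (p m)
      _ = (sectionAt (spinalAut S u x (φ h)) (u m))⁻¹ := by rw [HN m hm]
      _ = sectionAt (spinalAut S u x ((φ h)⁻¹)) (u m) := spinal_section_inv S u x hu hx _ m
      _ = sectionAt (spinalAut S u x (φ h⁻¹)) (u m) := by rw [map_inv]

lemma delta_le_inv (φ : G →* ∀ n, S (n + 1)) (hu : IsRay u)
    (hx : ∀ n, Fin.snoc (u n) (x n) ≠ u (n + 1)) (H : Subgroup G) :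
    deltaGroup S φ u x H ≤ invSubgroup S u x φ hu hx H := by
  rw [deltaGroup]
  rw [Subgroup.closure_le]
  rintro γ (hγ | ⟨g, hgH, rfl⟩)
  · intro p hp
    obtain ⟨N, hN⟩ := finitary_section_eventually hγ.1
    refine ⟨1, H.one_mem, N, fun m hm => ?_⟩
    rw [hN m hm (p m), map_one, spinal_one, sectionAt_one]
  · intro p hp
    by_cases hcase : ∀ n, p n = u n
    · refine ⟨g, hgH, 0, fun m _ => ?_⟩
      rw [hcase m]
    · push_neg at hcase
      obtain ⟨n₀, hn₀⟩ := hcase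
      refine ⟨1, H.one_mem, n₀ + 1, fun m hm => ?_⟩
      obtain ⟨k, rfl⟩ : ∃ k, m = k + 1 := ⟨m - 1, by omega⟩
      have hne : Fin.init (p (k + 1)) ≠ u k := by
        rw [hp k]
        exact ray_ne' hu hp hn₀ (by omega)
      rw [spinal_off S u x hu hx _ hne, map_one, spinal_one, sectionAt_one]

end Delta

end Spinal

end MaximalInjective


/-- The map `Δ` is injective on maximal subgroups of `G`. -/
theorem statement10
    (X : ℕ → Type) [∀ n, Finite (X n)] (hX2 : ∀ n, 2 ≤ Nat.card (X n))
    (S : ℕ → Type) [∀ n, Group (S n)] [∀ n, Finite (S n)] [∀ n, MulAction (S n) (X n)]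
    (hSnt : ∀ n, Nontrivial (S n))
    (hSperf : ∀ n, commutator (S n) = ⊤)
    (hfaith : ∀ (n : ℕ) (s : S n), (∀ y : X n, s • y = y) → s = 1)
    (htrans : ∀ (n : ℕ) (a b : X n), ∃ s : S n, s • a = b)
    (hnonreg : ∀ n : ℕ, ∃ (s : S n) (y : X n), s ≠ 1 ∧ s • y = y)
    (G : Type) [Group G] (φ : G →* ∀ n, S (n + 1))
    (hφinj : Function.Injective φ)
    (hφsub : ∀ n, Function.Surjective (fun g : G => φ g n))
    (hφinf : ∀ g : G, {n : ℕ | φ g n ≠ 1}.Finite → g = 1)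
    (u : ∀ n, Vertex X n) (hu : IsRay u)
    (x : ∀ n, X n) (hx : ∀ n, Fin.snoc (u n) (x n) ≠ u (n + 1))
    (hstab : ∀ n, MulAction.stabilizer (S n) (x n)
      ≠ MulAction.stabilizer (S n) (show X n from u (n + 1) (Fin.last n))) :
    ∀ M M' : Subgroup G, IsCoatom M → IsCoatom M' →
      deltaGroup S φ u x M = deltaGroup S φ u x M' → M = M' := by
  intro M M' _ _ heq
  have key : ∀ A B : Subgroup G, deltaGroup S φ u x A = deltaGroup S φ u x B → A ≤ B := by
    intro A B hAB g hgA
    have h1 : spinalAut S u x (fun n => φ g n) ∈ deltaGroup S φ u x B := by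
      rw [← hAB]
      exact Subgroup.subset_closure (Or.inr ⟨g, hgA, rfl⟩)
    have h2 := delta_le_inv S u x φ hu hx B h1
    have h3 : ∀ p : ∀ n, Vertex X n, IsRay p → ∃ h ∈ B, ∃ N, ∀ m, N ≤ m →
        sectionAt (spinalAut S u x (fun n => φ g n)) (p m)
          = sectionAt (spinalAut S u x (φ h)) (u m) := h2
    obtain ⟨h, hhB, N, hN⟩ := h3 u hu
    have hE : sectionAt (spinalAut S u x (φ g)) (u N)
        = sectionAt (spinalAut S u x (φ h)) (u N) := hN N le_rfl
    have h0 : sectionAt (spinalAut S u x (φ g * (φ h)⁻¹)) (u N) = 1 := by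
      rw [← spinal_section_mul S u x hu hx (φ g) ((φ h)⁻¹) N,
        ← spinal_section_inv S u x hu hx (φ h) N, hE, mul_inv_cancel]
    have htail := spinal_section_tail S u x hu hx hfaith (φ g * (φ h)⁻¹) h0
    have hfin : {n : ℕ | φ (g * h⁻¹) n ≠ 1}.Finite := by
      apply Set.Finite.subset (Set.finite_Iio N)
      intro k hk
      by_contra hc
      apply hk
      show φ (g * h⁻¹) k = 1
      have e1 : φ (g * h⁻¹) = φ g * (φ h)⁻¹ := by rw [map_mul, map_inv]
      rw [e1]
      exact htail k (not_lt.mp (fun hlt => hc (Set.mem_Iio.mpr hlt)))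
    have hgh : g * h⁻¹ = 1 := hφinf _ hfin
    have hEq : g = h := mul_inv_eq_one.mp hgh
    exact hEq ▸ hhB
  exact le_antisymm (key M M' heq) (key M' M heq.symm)

end BranchPaper
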